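/- arXiv:2406.14221 — 4 statements merged into one kernel-verified Lean document; each statement's English description precedes it below -/
import Mathlib

section
/- If f ∈ K[X] is irreducible of prime degree p over a field K, and L is a finite extension of K such that f becomes reducible over L, then p divides [L : K]. -/
/-!
Let `g` be an irreducible factor of `f` over `L` with `0 < deg g < p`, and let `M = L[X]/(g)`.
The root of `g` in `M` is a root of the irreducible `f`, so `p = deg f` divides
`[M : K] = [L : K] · deg g`; since `deg g` is prime to `p`, `p ∣ [L : K]`.
-/

open Polynomial

namespace Polynomial

variable {K L M : Type*} [Field K] [Field L] [Field M]

theorem exists_irreducible_dvd_natDegree_lt {g : L[X]} (hg0 : g ≠ 0) (hgu : ¬IsUnit g)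
    (hgirr : ¬Irreducible g) :
    ∃ h : L[X], Irreducible h ∧ h ∣ g ∧ h.natDegree < g.natDegree := by
  obtain ⟨h, hh, hdvd⟩ := WfDvdMonoid.exists_irreducible_factor hgu hg0
  refine ⟨h, hh, hdvd, (natDegree_le_of_dvd hdvd hg0).lt_of_ne fun heq => ?_⟩
  exact hgirr ((associated_of_dvd_of_natDegree_le hdvd hg0 heq.ge).irreducible hh)

theorem Irreducible.natDegree_dvd_finrank_of_aeval_eq_zero [Algebra K M] {f : K[X]}
    (hf : Irreducible f) {x : M} (hx : aeval x f = 0) : f.natDegree ∣ Module.finrank K M := by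
  by_cases hfin : FiniteDimensional K M
  · rw [minpoly.Irreducible.eq_minpoly hf hx,
      natDegree_C_mul (leadingCoeff_ne_zero.mpr hf.ne_zero)]
    exact minpoly.degree_dvd (IsIntegral.of_finite K x)
  · rw [Module.finrank_of_not_finite hfin]
    exact dvd_zero _

theorem Irreducible.natDegree_dvd_finrank_mul_natDegree_of_dvd_map [Algebra K L] {f : K[X]}
    (hf : Irreducible f) {g : L[X]} (hg : Irreducible g) (hgf : g ∣ f.map (algebraMap K L)) :
    f.natDegree ∣ Module.finrank K L * g.natDegree := by
  have : Fact (Irreducible g) := ⟨hg⟩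
  have hroot : aeval (AdjoinRoot.root g) f = 0 := by
    rw [aeval_def, IsScalarTower.algebraMap_eq K L (AdjoinRoot g), ← eval₂_map]
    exact eval₂_eq_zero_of_dvd_of_eval₂_eq_zero _ _ hgf (AdjoinRoot.eval₂_root g)
  rw [← finrank_quotient_span_eq_natDegree (f := g), Module.finrank_mul_finrank K L]
  exact hf.natDegree_dvd_finrank_of_aeval_eq_zero hroot

end Polynomial

theorem nagell_lemma_general (K L : Type*) [Field K] [Field L] [Algebra K L]
    (f : K[X]) (p : ℕ) (hp : p.Prime)
    (hdeg : f.natDegree = p) (hirr : Irreducible f)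
    (hred : ¬ Irreducible (f.map (algebraMap K L))) :
    p ∣ Module.finrank K L := by
  have hdegL : (f.map (algebraMap K L)).natDegree = p := by rw [natDegree_map, hdeg]
  have hunit : ¬IsUnit (f.map (algebraMap K L)) :=
    not_isUnit_of_natDegree_pos _ (hdegL ▸ hp.pos)
  obtain ⟨g, hg, hgf, hlt⟩ :=
    exists_irreducible_dvd_natDegree_lt (map_ne_zero hirr.ne_zero) hunit hred
  have hcop : p.Coprime g.natDegree :=
    Nat.coprime_of_lt_prime hg.natDegree_pos.ne' (hdegL ▸ hlt) hp
  exact hcop.dvd_of_dvd_mul_right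
    (hdeg ▸ hirr.natDegree_dvd_finrank_mul_natDegree_of_dvd_map hg hgf)

/-- Nagell's Lemma: if `f ∈ K[X]` is irreducible of prime degree `p` over `K`, and `L`
is a finite extension of `K` over which `f` becomes reducible, then `p ∣ [L : K]`. -/
theorem nagell_lemma (K L : Type*) [Field K] [Field L] [Algebra K L]
    [FiniteDimensional K L] (f : K[X]) (p : ℕ) (hp : p.Prime)
    (hdeg : f.natDegree = p) (hirr : Irreducible f)
    (hred : ¬ Irreducible (f.map (algebraMap K L))) :
    p ∣ Module.finrank K L :=
  nagell_lemma_general K L f p hp hdeg hirr hred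
end

section
/- Let K be a subfield of ℂ not containing a primitive q-th root of unity ε (q prime), and suppose X^q − a (a ∈ K, a ≠ 0) is reducible over K. Then the splitting field of X^q − a over K equals K(ε), which is also the splitting field of X^q − 1 over K. -/
open Polynomial IntermediateField

/-!
For `q` prime, `X ^ q - a` is reducible over `K` only if `a = b ^ q` for some `b ∈ K`.
Then the roots of `X ^ q - a` are the `b * ε ^ i`: they all lie in `K(ε)`, and `ε` is the
quotient of two of them, so they generate exactly `K(ε)`; `X ^ q - 1` is the case `b = 1`.
-/

section

variable {K L : Type*} [Field K] [Field L] [Algebra K L] {n : ℕ} [NeZero n] {ε : L}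

theorem mem_rootSet_X_pow_sub_C_pow_iff (hε : IsPrimitiveRoot ε n) {c : K} (hc : c ≠ 0)
    {x : L} : x ∈ (X ^ n - C (c ^ n)).rootSet L ↔ ∃ i, x = algebraMap K L c * ε ^ i := by
  have hc' : algebraMap K L c ≠ 0 := (_root_.map_ne_zero _).mpr hc
  rw [mem_rootSet_of_ne (X_pow_sub_C_ne_zero (NeZero.pos n) _)]
  simp only [map_sub, map_pow, aeval_X, aeval_C, sub_eq_zero]
  constructor
  · intro hx
    have hroot : (x / algebraMap K L c) ^ n = 1 := by rw [div_pow, hx, div_self (pow_ne_zero _ hc')]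
    obtain ⟨i, -, hεi⟩ := hε.eq_pow_of_pow_eq_one hroot
    exact ⟨i, by rw [hεi, mul_div_cancel₀ _ hc']⟩
  · rintro ⟨i, rfl⟩
    rw [mul_pow, ← pow_mul, mul_comm i, pow_mul, hε.pow_eq_one, one_pow, mul_one]

theorem adjoin_rootSet_X_pow_sub_C_pow (hε : IsPrimitiveRoot ε n) {c : K} (hc : c ≠ 0) :
    adjoin K ((X ^ n - C (c ^ n)).rootSet L) = adjoin K {ε} := by
  have hε_mem : ε ∈ adjoin K {ε} := mem_adjoin_simple_self K ε
  apply le_antisymm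
  · rw [adjoin_le_iff]
    rintro x hx
    obtain ⟨i, rfl⟩ := (mem_rootSet_X_pow_sub_C_pow_iff hε hc).mp hx
    exact mul_mem (IntermediateField.algebraMap_mem _ c) (pow_mem hε_mem i)
  · rw [adjoin_simple_le_iff]
    have hroot : algebraMap K L c * ε ∈ (X ^ n - C (c ^ n)).rootSet L :=
      (mem_rootSet_X_pow_sub_C_pow_iff hε hc).mpr ⟨1, by rw [pow_one]⟩
    have hε_eq : ε = (algebraMap K L c)⁻¹ * (algebraMap K L c * ε) := by
      rw [inv_mul_cancel_left₀ ((_root_.map_ne_zero _).mpr hc)]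
    rw [hε_eq]
    exact mul_mem (inv_mem (IntermediateField.algebraMap_mem _ c)) (subset_adjoin K _ hroot)

end

theorem splitting_field_reducible_binomial_general (K : Subfield ℂ) (q : ℕ) (hq : q.Prime)
    (a : K) (ha : a ≠ 0) (ε : ℂ) (hε : IsPrimitiveRoot ε q)
    (hred : ¬ Irreducible (X ^ q - C a : K[X])) :
    adjoin K ((X ^ q - C a : K[X]).rootSet ℂ) = adjoin K {ε} ∧
    adjoin K ((X ^ q - C 1 : K[X]).rootSet ℂ) = adjoin K {ε} := by
  have : NeZero q := ⟨hq.ne_zero⟩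
  obtain ⟨b, rfl⟩ : ∃ b : K, b ^ q = a := by
    by_contra h
    exact hred ((X_pow_sub_C_irreducible_iff_of_prime hq).mpr (by simpa using h))
  have hb : b ≠ 0 := by
    rintro rfl
    exact ha (zero_pow hq.ne_zero)
  refine ⟨adjoin_rootSet_X_pow_sub_C_pow hε hb, ?_⟩
  simpa using adjoin_rootSet_X_pow_sub_C_pow (L := ℂ) hε (one_ne_zero' K)

/-- Let `K ⊆ ℂ` not contain a primitive `q`-th root of unity `ε` (`q` prime), and
suppose `X^q - a` (`a ∈ K`, `a ≠ 0`) is reducible over `K`. Then the splitting field of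
`X^q - a` over `K` equals `K(ε)`, which is also the splitting field of `X^q - 1`. -/
theorem splitting_field_reducible_binomial (K : Subfield ℂ) (q : ℕ) (hq : q.Prime)
    (a : K) (ha : a ≠ 0) (ε : ℂ) (hε : IsPrimitiveRoot ε q) (hεK : ε ∉ K)
    (hred : ¬ Irreducible (X ^ q - C a : K[X])) :
    adjoin K ((X ^ q - C a : K[X]).rootSet ℂ) = adjoin K {ε} ∧
    adjoin K ((X ^ q - C 1 : K[X]).rootSet ℂ) = adjoin K {ε} :=
  splitting_field_reducible_binomial_general K q hq a ha ε hε hred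
end

section
/- Let K ⊆ ℂ be closed under complex conjugation and let K ⊆ L be a radical extension (a tower of simple radical extensions). Then there is a tower K = K₀ ⊆ K₁ ⊆ ⋯ ⊆ K_m of simple radical extensions of prime exponent with L ⊆ K_m and each K_i closed under complex conjugation. -/
/-- A subfield of `ℂ` closed under complex conjugation. -/
def ConjInvariant (F : Subfield ℂ) : Prop :=
  ∀ x ∈ F, (starRingEnd ℂ) x ∈ F

/-- `F'` is a simple radical extension of `F` of prime exponent: `F' = F(α)` with
`α^q ∈ F` for some prime `q`. -/
def IsSimpleRadicalExt (F F' : Subfield ℂ) : Prop :=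
  ∃ (α : ℂ) (q : ℕ), q.Prime ∧ α ^ q ∈ F ∧ F' = Subfield.closure (↑F ∪ {α})

/-- `L` is a radical extension of `K`: there is a finite tower of simple radical
extensions from `K` to `L`. -/
def IsRadicalExt (K L : Subfield ℂ) : Prop :=
  ∃ (n : ℕ) (c : Fin (n + 1) → Subfield ℂ), c 0 = K ∧ c (Fin.last n) = L ∧
    ∀ i : Fin n, IsSimpleRadicalExt (c i.castSucc) (c i.succ)

lemma conjInv_closure (S : Set ℂ) (h : ∀ x ∈ S, (starRingEnd ℂ) x ∈ Subfield.closure S) :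
    ConjInvariant (Subfield.closure S) := by
  intro x hx
  have hle : Subfield.closure S ≤ (Subfield.closure S).comap (starRingEnd ℂ) :=
    Subfield.closure_le.mpr h
  exact hle hx

lemma key (n : ℕ) : ∀ (c : Fin (n+1) → Subfield ℂ), ConjInvariant (c 0) →
    (∀ i : Fin n, IsSimpleRadicalExt (c i.castSucc) (c i.succ)) →
    ∃ (m : ℕ) (d : Fin (m + 1) → Subfield ℂ), d 0 = c 0 ∧ c (Fin.last n) ≤ d (Fin.last m) ∧
      (∀ i : Fin m, IsSimpleRadicalExt (d i.castSucc) (d i.succ)) ∧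
      ∀ i, ConjInvariant (d i) := by
  induction n with
  | zero =>
    intro c hc _
    refine ⟨0, c, rfl, le_rfl, fun i => i.elim0, fun i => ?_⟩
    have : i = 0 := Fin.ext (by omega)
    rw [this]; exact hc
  | succ n ih =>
    intro c hc hstep
    obtain ⟨m, d, hd0, hdlast, hdstep, hdconj⟩ :=
      ih (c ∘ Fin.castSucc) hc (fun i => hstep i.castSucc)
    set N := d (Fin.last m) with hN
    obtain ⟨α, q, hq, hαq, hL⟩ := hstep (Fin.last n)
    set M := c ((Fin.last n).castSucc) with hM
    have hMN : M ≤ N := hdlast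
    have hNconj : ConjInvariant N := hdconj _
    set N₁ := Subfield.closure (↑N ∪ {α * (starRingEnd ℂ) α}) with hN₁
    set N₂ := Subfield.closure (↑N₁ ∪ {α}) with hN₂
    have hNN₁ : N ≤ N₁ := fun x hx => Subfield.subset_closure (Or.inl hx)
    have hN₁N₂ : N₁ ≤ N₂ := fun x hx => Subfield.subset_closure (Or.inl hx)
    have hαα : α * (starRingEnd ℂ) α ∈ N₁ := Subfield.subset_closure (Or.inr rfl)
    have hαN₂ : α ∈ N₂ := Subfield.subset_closure (Or.inr rfl)
    have hααq : (α * (starRingEnd ℂ) α) ^ q ∈ N := by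
      rw [mul_pow, ← map_pow]
      exact mul_mem (hMN hαq) (hNconj _ (hMN hαq))
    have hαqN₁ : α ^ q ∈ N₁ := hNN₁ (hMN hαq)
    have hN₁conj : ConjInvariant N₁ := by
      apply conjInv_closure
      rintro x (hx | hx)
      · exact hNN₁ (hNconj x hx)
      · rw [Set.mem_singleton_iff] at hx
        subst hx
        have : (starRingEnd ℂ) (α * (starRingEnd ℂ) α) = α * (starRingEnd ℂ) α := by
          simp [mul_comm]
        rw [this]; exact hαα
    have hN₂conj : ConjInvariant N₂ := by
      apply conjInv_closure
      rintro x (hx | hx)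
      · exact hN₁N₂ (hN₁conj x hx)
      · rw [Set.mem_singleton_iff] at hx
        subst hx
        by_cases h0 : x = 0
        · subst h0; rw [map_zero]; exact zero_mem _
        · have : (starRingEnd ℂ) x = (x * (starRingEnd ℂ) x) * x⁻¹ := by
            field_simp
          rw [this]
          exact mul_mem (hN₁N₂ hαα) (inv_mem hαN₂)
    -- the extended tower
    refine ⟨m + 2, fun i => if h : i.val < m + 1 then d ⟨i.val, h⟩
      else if i.val = m + 1 then N₁ else N₂, ?_, ?_, ?_, ?_⟩
    · simp [hd0]
    · have hv1 : ¬ ((Fin.last (m + 2)).val < m + 1) := by simp [Fin.last]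
      have hv2 : ¬ ((Fin.last (m + 2)).val = m + 1) := by simp [Fin.last]
      simp only [dif_neg hv1, if_neg hv2]
      have hcl : c (Fin.last (n+1)) = Subfield.closure (↑M ∪ {α}) := hL
      rw [hcl]
      apply Subfield.closure_le.mpr
      rintro x (hx | hx)
      · exact hN₁N₂ (hNN₁ (hMN hx))
      · rw [Set.mem_singleton_iff] at hx; subst hx; exact hαN₂
    · intro i
      rcases lt_trichotomy i.val m with h | h | h
      · have h1 : i.castSucc.val < m + 1 := by simp only [Fin.coe_castSucc]; omega
        have h2 : i.succ.val < m + 1 := by simp only [Fin.val_succ]; omega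
        simp only [dif_pos h1, dif_pos h2]
        have e1 : (⟨i.castSucc.val, h1⟩ : Fin (m+1)) = (⟨i.val, h⟩ : Fin m).castSucc :=
          Fin.ext (by simp)
        have e2 : (⟨i.succ.val, h2⟩ : Fin (m+1)) = (⟨i.val, h⟩ : Fin m).succ :=
          Fin.ext (by simp)
        rw [e1, e2]
        exact hdstep ⟨i.val, h⟩
      · have h1 : i.castSucc.val < m + 1 := by simp only [Fin.coe_castSucc]; omega
        have h2 : ¬ i.succ.val < m + 1 := by simp only [Fin.val_succ]; omega
        have h3 : i.succ.val = m + 1 := by simp only [Fin.val_succ]; omega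
        simp only [dif_pos h1, dif_neg h2, if_pos h3]
        have hd_eq : d ⟨i.castSucc.val, h1⟩ = N := by
          rw [hN]; congr 1; exact Fin.ext (by simp [Fin.last, h])
        rw [hd_eq]
        exact ⟨α * (starRingEnd ℂ) α, q, hq, hααq, hN₁⟩
      · have h1 : ¬ i.castSucc.val < m + 1 := by simp only [Fin.coe_castSucc]; omega
        have h1' : i.castSucc.val = m + 1 := by
          have := i.isLt; simp only [Fin.coe_castSucc] at *; omega
        have h2 : ¬ i.succ.val < m + 1 := by simp only [Fin.val_succ]; omega
        have h2' : ¬ i.succ.val = m + 1 := by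
          simp only [Fin.val_succ]; omega
        simp only [dif_neg h1, if_pos h1', dif_neg h2, if_neg h2']
        exact ⟨α, q, hq, hαqN₁, hN₂⟩
    · intro i
      rcases lt_trichotomy i.val (m + 1) with h | h | h
      · simp only [dif_pos h]; exact hdconj _
      · simp only [dif_neg (by omega : ¬ i.val < m + 1), if_pos h]; exact hN₁conj
      · simp only [dif_neg (by omega : ¬ i.val < m + 1),
          if_neg (by omega : ¬ i.val = m + 1)]; exact hN₂conj

/-- Let `K ⊆ ℂ` be closed under complex conjugation and `K ⊆ L` a radical extension.
Then there is a tower of simple radical extensions of prime exponent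
`K = K₀ ⊆ K₁ ⊆ ⋯ ⊆ K_m` with `L ≤ K_m` and each `K_i` closed under complex
conjugation. -/
theorem exists_conj_invariant_radical_tower (K L : Subfield ℂ)
    (hK : ConjInvariant K) (hKL : K ≤ L) (hrad : IsRadicalExt K L) :
    ∃ (m : ℕ) (c : Fin (m + 1) → Subfield ℂ), c 0 = K ∧ L ≤ c (Fin.last m) ∧
      (∀ i : Fin m, IsSimpleRadicalExt (c i.castSucc) (c i.succ)) ∧
      ∀ i, ConjInvariant (c i) := by
  obtain ⟨n, c, h0, hl, hstep⟩ := hrad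
  obtain ⟨m, d, hd0, hdlast, hdstep, hdconj⟩ := key n c (h0 ▸ hK) hstep
  exact ⟨m, d, h0 ▸ hd0, hl ▸ hdlast, hdstep, hdconj⟩
end

section
/- Let K ⊆ ℝ be a subfield and f ∈ K[X] an irreducible polynomial of odd prime degree p that is solvable by radicals over K. Then f has exactly one real root or all p of its roots are real. -/
open Polynomial

/-!
The Galois group `G` of `f` is solvable (its roots lie in a radical tower) and acts faithfully and
transitively on the `p` roots. A nontrivial abelian normal subgroup `N` of `G` is transitive, since
its orbits are blocks, hence regular. If `g ∈ G` fixes two roots `x ≠ y = m • x` with `m ∈ N`,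
then `g m g⁻¹` and `m` both send `x` to `y`, so `g` commutes with `m`; but `⟨m⟩`, being normal
in `N`, is again transitive, so `g` fixes every root and `g = 1`. Complex conjugation restricts
to an involution of `G` whose fixed roots are the real ones; there is one since `p` is odd, and
if there are two then all roots are real.
-/

theorem Group.IsSolvable.exists_normal_isMulCommutative_ne_bot {G : Type*} [Group G]
    [Group.IsSolvable G] [Nontrivial G] :
    ∃ N : Subgroup G, N.Normal ∧ N ≠ ⊥ ∧ IsMulCommutative N := by
  classical
  have hex : ∃ k, derivedSeries G k = ⊥ := Group.IsSolvable.solvable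
  obtain ⟨k, hk⟩ : ∃ k, Nat.find hex = k + 1 := by
    refine Nat.exists_eq_add_one.mpr (Nat.pos_of_ne_zero fun h => ?_)
    have := Nat.find_spec hex
    rw [h, derivedSeries_zero] at this
    exact top_ne_bot this
  refine ⟨derivedSeries G k, derivedSeries_normal G k, Nat.find_min hex (by omega), ?_⟩
  rw [← Subgroup.commutator_self_eq_bot_iff, ← derivedSeries_succ, ← hk]
  exact Nat.find_spec hex

namespace MulAction

variable {G X : Type*} [Group G] [MulAction G X]

theorem eq_of_smul_eq_smul_of_isMulCommutative [IsMulCommutative G] [FaithfulSMul G X]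
    [IsPretransitive G X] {a b : G} {x : X} (h : a • x = b • x) : a = b := by
  refine eq_of_smul_eq_smul (α := X) fun z => ?_
  obtain ⟨c, rfl⟩ := exists_smul_eq G x z
  rw [smul_smul, mul_comm' a, ← smul_smul, h, smul_smul, mul_comm', ← smul_smul]

theorem isPretransitive_of_normal_of_prime_card [FaithfulSMul G X] [IsPretransitive G X]
    (hp : (Nat.card X).Prime) {N : Subgroup G} [N.Normal] (hN : N ≠ ⊥) :
    IsPretransitive N X := by
  have := IsPreprimitive.of_prime_card (G := G) hp
  refine IsQuasiPreprimitive.isPretransitive_of_normal fun hfix => hN ?_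
  refine (Subgroup.eq_bot_iff_forall N).mpr fun n hn => eq_of_smul_eq_smul (α := X) fun z => ?_
  rw [one_smul]
  exact (Set.eq_univ_iff_forall.mp hfix z) ⟨n, hn⟩

theorem eq_one_of_smul_eq_self_of_prime_card [Group.IsSolvable G] [FaithfulSMul G X]
    [IsPretransitive G X] (hp : (Nat.card X).Prime) {g : G} {x y : X} (hxy : x ≠ y)
    (hx : g • x = x) (hy : g • y = y) : g = 1 := by
  nontriviality G
  obtain ⟨N, hNormal, hN, _⟩ := Group.IsSolvable.exists_normal_isMulCommutative_ne_bot (G := G)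
  have hNtrans := isPretransitive_of_normal_of_prime_card hp hN
  obtain ⟨m, hm⟩ := exists_smul_eq N x y
  have hgm : Commute g m := by
    have hconj : (⟨g * m * g⁻¹, hNormal.conj_mem m m.2 g⟩ : N) • x = m • x := by
      rw [Subgroup.mk_smul, ← smul_smul, ← smul_smul, inv_smul_eq_iff.mpr hx.symm,
        ← Subgroup.smul_def, hm, hy]
    exact mul_inv_eq_iff_eq_mul.mp
      (congrArg Subtype.val (eq_of_smul_eq_smul_of_isMulCommutative hconj))
  have hHfix : fixedPoints (Subgroup.zpowers m) X ≠ Set.univ := fun hfix =>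
    hxy (hm ▸ (Set.eq_univ_iff_forall.mp hfix x ⟨m, Subgroup.mem_zpowers m⟩).symm)
  have hNprim := IsPreprimitive.of_prime_card (G := N) hp
  have hmtrans := IsQuasiPreprimitive.isPretransitive_of_normal hHfix
  refine eq_of_smul_eq_smul (α := X) fun z => ?_
  obtain ⟨⟨_, k, rfl⟩, rfl⟩ := exists_smul_eq (Subgroup.zpowers m) x z
  change g • ((m : G) ^ k • x) = 1 • ((m : G) ^ k • x)
  rw [one_smul, smul_smul, (hgm.zpow_right k).eq, ← smul_smul, hx]

theorem exists_smul_eq_self_of_sq_eq_one [Finite X] (hX : Odd (Nat.card X)) {g : G}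
    (hg : g ^ 2 = 1) : ∃ x : X, g • x = x := by
  have := Fintype.ofFinite X
  have : Fact (Nat.Prime 2) := ⟨Nat.prime_two⟩
  refine Equiv.Perm.exists_fixed_point_of_prime (p := 2) (n := 1) ?_ (σ := toPerm g) ?_
  · rw [← Nat.card_eq_fintype_card]
    exact fun h => by have := Nat.odd_iff.mp hX; omega
  · change toPermHom G X g ^ 2 ^ 1 = 1
    rw [pow_one, ← map_pow, hg, map_one]

end MulAction

theorem IsRadicalExt.le_solvableByRad {K L : Subfield ℂ} (h : IsRadicalExt K L) :
    L ≤ (solvableByRad K ℂ).toSubfield := by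
  obtain ⟨n, c, rfl, rfl, hc⟩ := h
  induction Fin.last n using Fin.induction with
  | zero => exact fun x hx => (solvableByRad (c 0) ℂ).algebraMap_mem ⟨x, hx⟩
  | succ i ih =>
    obtain ⟨α, q, hq, hα, hi⟩ := hc i
    rw [hi, Subfield.closure_le]
    rintro x (hx | rfl)
    · exact ih hx
    · exact solvableByRad.rad_mem hq.ne_zero (ih hα)

instance Polynomial.Gal.faithfulSMul_rootSet {F E : Type*} [Field F] [Field E] [Algebra F E]
    (f : F[X]) [Fact ((f.map (algebraMap F E)).Splits)] : FaithfulSMul f.Gal (f.rootSet E) :=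
  ⟨fun h => galActionHom_injective f E (Equiv.ext h)⟩

noncomputable def Complex.conjAlgEquivOfReal (K : Subfield ℂ) (hK : ∀ x ∈ K, x.im = 0) :
    ℂ ≃ₐ[K] ℂ :=
  AlgEquiv.ofRingEquiv (f := Complex.conjAe.toRingEquiv) fun r =>
    Complex.conj_eq_iff_im.mpr (hK r r.2)

namespace Polynomial.Gal

variable {K : Subfield ℂ} (hK : ∀ x ∈ K, x.im = 0) {f : K[X]}
  [Fact ((f.map (algebraMap K ℂ)).Splits)]

theorem restrict_conjAlgEquivOfReal_smul_eq_self_iff (x : f.rootSet ℂ) :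
    restrict f ℂ (Complex.conjAlgEquivOfReal K hK) • x = x ↔ (x : ℂ).im = 0 := by
  rw [← Subtype.coe_inj, restrict_smul]
  exact Complex.conj_eq_iff_im

theorem restrict_conjAlgEquivOfReal_sq :
    restrict f ℂ (Complex.conjAlgEquivOfReal K hK) ^ 2 = 1 := by
  refine eq_of_smul_eq_smul (α := f.rootSet ℂ) fun x => ?_
  rw [one_smul, sq, mul_smul, ← Subtype.coe_inj, restrict_smul, restrict_smul]
  exact Complex.conj_conj _

end Polynomial.Gal

/-- Kronecker's Theorem: let `K` be a subfield of the reals (viewed inside `ℂ`) and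
`f ∈ K[X]` an irreducible polynomial of odd prime degree `p` that is solvable by
radicals over `K`. Then `f` has exactly one real root or all of its roots are real. -/
theorem kronecker (K : Subfield ℂ) (hKreal : ∀ x ∈ K, x.im = 0)
    (f : K[X]) (p : ℕ) (hp : p.Prime) (hodd : Odd p) (hdeg : f.natDegree = p)
    (hirr : Irreducible f)
    (hsolv : ∃ L : Subfield ℂ, IsRadicalExt K L ∧ ∀ z ∈ f.rootSet ℂ, z ∈ L) :
    (∃! z : ℂ, z ∈ f.rootSet ℂ ∧ z.im = 0) ∨ (∀ z ∈ f.rootSet ℂ, z.im = 0) := by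
  have hsplit : Fact ((f.map (algebraMap K ℂ)).Splits) := ⟨IsAlgClosed.splits _⟩
  have hcard : Nat.card (f.rootSet ℂ) = p := by
    rw [Nat.card_eq_fintype_card, card_rootSet_eq_natDegree hirr.separable hsplit.out, hdeg]
  obtain ⟨L, hKL, hroots⟩ := hsolv
  obtain ⟨⟨z₀, hz₀⟩⟩ : Nonempty (f.rootSet ℂ) := Nat.card_pos_iff.mp (hcard ▸ hp.pos) |>.1
  have := isSolvable_gal_of_irreducible (hKL.le_solvableByRad (hroots z₀ hz₀)) hirr
    (mem_rootSet.mp hz₀).2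
  have := Gal.galAction_isPretransitive f ℂ hirr
  set σ := Gal.restrict f ℂ (Complex.conjAlgEquivOfReal K hKreal)
  have hσ : ∀ x : f.rootSet ℂ, σ • x = x ↔ (x : ℂ).im = 0 :=
    Gal.restrict_conjAlgEquivOfReal_smul_eq_self_iff hKreal
  obtain ⟨x₀, hx₀⟩ := MulAction.exists_smul_eq_self_of_sq_eq_one (hcard ▸ hodd)
    (Gal.restrict_conjAlgEquivOfReal_sq hKreal : σ ^ 2 = 1)
  by_cases hσ1 : σ = 1
  · exact Or.inr fun z hz => (hσ ⟨z, hz⟩).mp (by rw [hσ1, one_smul])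
  · refine Or.inl ⟨x₀, ⟨x₀.2, (hσ x₀).mp hx₀⟩, fun z hz => by_contra fun hne => hσ1 ?_⟩
    exact MulAction.eq_one_of_smul_eq_self_of_prime_card (hcard ▸ hp) (x := ⟨z, hz.1⟩)
      (Subtype.coe_ne_coe.mp hne) ((hσ _).mpr hz.2) hx₀
end
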